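/- arXiv:2004.09148 — 4 statements merged into one kernel-verified Lean document; each statement's English description precedes it below -/
import Mathlib

section
/- Let P and Q be probability measures with P absolutely continuous with respect to Q, and let E be any measurable event. Then for all γ ∈ ℝ, P[E] ≤ P[log(dP/dQ) > γ] + e^γ · Q[E]. -/
open MeasureTheory Real

/-- Strong converse lemma: if `P ≪ Q`, then for every event `E` and every `γ ∈ ℝ`,
`P[E] ≤ P[log(dP/dQ) > γ] + e^γ Q[E]`. -/
theorem strong_converse_lemma {Ω : Type*} [MeasurableSpace Ω] (P Q : Measure Ω)
    [IsProbabilityMeasure P] [IsProbabilityMeasure Q] (hPQ : P ≪ Q)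
    (E : Set Ω) (hE : MeasurableSet E) (γ : ℝ) :
    P E ≤ P {ω | γ < Real.log ((P.rnDeriv Q ω).toReal)}
      + ENNReal.ofReal (Real.exp γ) * Q E := by
  set f := P.rnDeriv Q with hf_def
  have hf : Measurable f := Measure.measurable_rnDeriv P Q
  set S := {ω | γ < Real.log ((f ω).toReal)} with hS
  have hSm : MeasurableSet S :=
    measurableSet_lt measurable_const (hf.ennreal_toReal.log)
  have h1 : P E ≤ P S + P (E ∩ Sᶜ) := by
    calc P E = P ((E ∩ S) ∪ (E ∩ Sᶜ)) := by
          rw [← Set.inter_union_distrib_left, Set.union_compl_self, Set.inter_univ]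
      _ ≤ P (E ∩ S) + P (E ∩ Sᶜ) := measure_union_le _ _
      _ ≤ P S + P (E ∩ Sᶜ) := by
          gcongr
          exact Set.inter_subset_right
  refine h1.trans ?_
  gcongr
  have hPE : P (E ∩ Sᶜ) = ∫⁻ ω in E ∩ Sᶜ, f ω ∂Q :=
    (Measure.setLIntegral_rnDeriv hPQ _).symm
  rw [hPE]
  have hbound : ∀ᵐ ω ∂Q, ω ∈ E ∩ Sᶜ → f ω ≤ ENNReal.ofReal (Real.exp γ) := by
    filter_upwards [Measure.rnDeriv_lt_top P Q] with ω hlt hω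
    have hlog : Real.log ((f ω).toReal) ≤ γ := not_lt.1 hω.2
    have hle : (f ω).toReal ≤ Real.exp γ := by
      rcases le_or_gt ((f ω).toReal) 0 with h | h
      · exact h.trans (Real.exp_pos γ).le
      · exact (Real.log_le_iff_le_exp h).1 hlog
    calc f ω = ENNReal.ofReal ((f ω).toReal) := (ENNReal.ofReal_toReal hlt.ne).symm
      _ ≤ ENNReal.ofReal (Real.exp γ) := ENNReal.ofReal_le_ofReal hle
  calc ∫⁻ ω in E ∩ Sᶜ, f ω ∂Q
      ≤ ∫⁻ _ in E ∩ Sᶜ, ENNReal.ofReal (Real.exp γ) ∂Q :=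
        lintegral_mono_ae ((ae_restrict_iff' (hE.inter hSm.compl)).2 hbound)
    _ = ENNReal.ofReal (Real.exp γ) * Q (E ∩ Sᶜ) := by
        rw [lintegral_const, Measure.restrict_apply MeasurableSet.univ, Set.univ_inter]
    _ ≤ ENNReal.ofReal (Real.exp γ) * Q E := by
        gcongr
        exact Set.inter_subset_left
end

section
/- Suppose that for each w, the random variable gen(w, Z^n) satisfies E_{P_{Z^n}}[exp(λ·gen(w,Z^n))] ≤ exp(λ²σ²/(2n)) for all λ ∈ ℝ, and that the joint distribution P_{WZ^n} is absolutely continuous with respect to the product P_W × P_{Z^n}. Then for all λ ∈ ℝ, E_{P_{WZ^n}}[exp(λ·gen(W,Z^n) − λ²σ²/(2n) − ı(W,Z^n))] ≤ 1, where ı(w,z) = log(dP_{WZ^n}/d(P_W×P_{Z^n}))(w,z). -/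
open MeasureTheory Real

/-! The density `dμ/d(μW ⊗ μZ)` cancels the factor `exp ı`, so the left-hand side is at most the
same expectation of `exp (λ gen - λ²σ²/(2n))` under the product measure. Under the product, Tonelli
integrates out `Z` first with `W = w` frozen, and the subgaussian bound for `gen (w, ·)` makes each
inner integral at most `1`. -/

namespace MeasureTheory

variable {α β : Type*} [MeasurableSpace α] [MeasurableSpace β]

theorem lintegral_ofReal_exp_sub_log_rnDeriv_le {μ ν : Measure α} [SigmaFinite μ]
    [μ.HaveLebesgueDecomposition ν] (hμν : μ ≪ ν) {f : α → ℝ} (hf : Measurable f) :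
    ∫⁻ x, ENNReal.ofReal (exp (f x - log (μ.rnDeriv ν x).toReal)) ∂μ
      ≤ ∫⁻ x, ENNReal.ofReal (exp (f x)) ∂ν := by
  have hmeas : Measurable fun x ↦ ENNReal.ofReal (exp (f x - log (μ.rnDeriv ν x).toReal)) := by
    have := μ.measurable_rnDeriv ν
    fun_prop
  rw [← lintegral_rnDeriv_mul hμν hmeas.aemeasurable]
  refine lintegral_mono_ae ?_
  filter_upwards [Measure.rnDeriv_lt_top μ ν] with x hx_lt_top
  rcases eq_or_ne (μ.rnDeriv ν x) 0 with h0 | h0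
  · simp [h0]
  · have hpos : 0 < (μ.rnDeriv ν x).toReal := ENNReal.toReal_pos h0 hx_lt_top.ne
    rw [exp_sub, exp_log hpos]
    nth_rw 1 [← ENNReal.ofReal_toReal hx_lt_top.ne]
    rw [← ENNReal.ofReal_mul hpos.le, mul_div_cancel₀ _ hpos.ne']

theorem lintegral_prod_le_of_forall_lintegral_le {μ : Measure α} {ν : Measure β}
    {f : α × β → ENNReal} {C : ENNReal} (h : ∀ x, ∫⁻ y, f (x, y) ∂ν ≤ C) :
    ∫⁻ z, f z ∂μ.prod ν ≤ μ Set.univ * C :=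
  calc ∫⁻ z, f z ∂μ.prod ν ≤ ∫⁻ x, ∫⁻ y, f (x, y) ∂ν ∂μ := lintegral_prod_le f
    _ ≤ ∫⁻ _, C ∂μ := lintegral_mono h
    _ = μ Set.univ * C := by rw [lintegral_const, mul_comm]

theorem lintegral_ofReal_exp_sub_le_one {ν : Measure β} {g : β → ℝ} {c : ℝ}
    (h : ∫⁻ y, ENNReal.ofReal (exp (g y)) ∂ν ≤ ENNReal.ofReal (exp c)) :
    ∫⁻ y, ENNReal.ofReal (exp (g y - c)) ∂ν ≤ 1 := by
  simp_rw [exp_sub, div_eq_mul_inv, ENNReal.ofReal_mul (exp_pos _).le]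
  calc ∫⁻ y, ENNReal.ofReal (exp (g y)) * ENNReal.ofReal (exp c)⁻¹ ∂ν
      = (∫⁻ y, ENNReal.ofReal (exp (g y)) ∂ν) * ENNReal.ofReal (exp c)⁻¹ :=
        lintegral_mul_const' _ _ ENNReal.ofReal_ne_top
    _ ≤ ENNReal.ofReal (exp c) * ENNReal.ofReal (exp c)⁻¹ := by gcongr
    _ = 1 := by
        rw [← ENNReal.ofReal_mul (exp_pos c).le, mul_inv_cancel₀ (exp_pos c).ne',
          ENNReal.ofReal_one]

end MeasureTheory

theorem main_exponential_inequality_general {𝒲 𝒵 : Type*} [MeasurableSpace 𝒲] [MeasurableSpace 𝒵]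
    (μ : Measure (𝒲 × 𝒵)) [IsProbabilityMeasure μ] (σ : ℝ) (n : ℕ)
    (μW : Measure 𝒲) (μZ : Measure 𝒵) (hμW : μW = μ.map Prod.fst) (hμZ : μZ = μ.map Prod.snd)
    (hac : μ ≪ μW.prod μZ)
    (gen : 𝒲 × 𝒵 → ℝ) (hgen : Measurable gen)
    (hsub : ∀ w : 𝒲, ∀ l : ℝ,
      ∫⁻ z, ENNReal.ofReal (Real.exp (l * gen (w, z))) ∂μZ
        ≤ ENNReal.ofReal (Real.exp (l ^ 2 * σ ^ 2 / (2 * n)))) :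
    ∀ l : ℝ,
      ∫⁻ p, ENNReal.ofReal (Real.exp (l * gen p - l ^ 2 * σ ^ 2 / (2 * n)
          - Real.log (((μ.rnDeriv (μW.prod μZ)) p).toReal))) ∂μ ≤ 1 := by
  intro l
  have : IsProbabilityMeasure μW := hμW ▸ Measure.isProbabilityMeasure_map (by fun_prop)
  have : IsProbabilityMeasure μZ := hμZ ▸ Measure.isProbabilityMeasure_map (by fun_prop)
  calc _ ≤ ∫⁻ p, ENNReal.ofReal (exp (l * gen p - l ^ 2 * σ ^ 2 / (2 * n))) ∂μW.prod μZ :=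
        lintegral_ofReal_exp_sub_log_rnDeriv_le hac (by fun_prop)
    _ ≤ μW Set.univ * 1 :=
        lintegral_prod_le_of_forall_lintegral_le fun w ↦ lintegral_ofReal_exp_sub_le_one (hsub w l)
    _ = 1 := by simp

/-- Main inequality (Theorem 1): if for each `w` the loss deviation `gen (w, ·)` is
`(σ/√n)`-subgaussian with mean zero under the marginal `P_{Z^n}`, and the joint law is
absolutely continuous with respect to the product of its marginals, then for all `λ`,
`E_{P_{WZ^n}}[exp(λ gen(W,Z^n) - λ²σ²/(2n) - ı(W,Z^n))] ≤ 1`. -/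
theorem main_exponential_inequality {𝒲 𝒵 : Type*} [MeasurableSpace 𝒲] [MeasurableSpace 𝒵]
    (μ : Measure (𝒲 × 𝒵)) [IsProbabilityMeasure μ] (σ : ℝ) (n : ℕ) (hn : 0 < n)
    (μW : Measure 𝒲) (μZ : Measure 𝒵) (hμW : μW = μ.map Prod.fst) (hμZ : μZ = μ.map Prod.snd)
    (hac : μ ≪ μW.prod μZ)
    (gen : 𝒲 × 𝒵 → ℝ) (hgen : Measurable gen)
    (hsub : ∀ w : 𝒲, ∀ l : ℝ,
      ∫⁻ z, ENNReal.ofReal (Real.exp (l * gen (w, z))) ∂μZ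
        ≤ ENNReal.ofReal (Real.exp (l ^ 2 * σ ^ 2 / (2 * n)))) :
    ∀ l : ℝ,
      ∫⁻ p, ENNReal.ofReal (Real.exp (l * gen p - l ^ 2 * σ ^ 2 / (2 * n)
          - Real.log (((μ.rnDeriv (μW.prod μZ)) p).toReal))) ∂μ ≤ 1 :=
  main_exponential_inequality_general μ σ n μW μZ hμW hμZ hac gen hgen hsub
end

section
/- Under the hypotheses of the main inequality (E_{P_{WZ^n}}[exp(λ·gen(W,Z^n) − λ²σ²/(2n) − ı(W,Z^n))] ≤ 1 for all λ), the average generalization error satisfies |E_{P_{WZ^n}}[gen(W,Z^n)]| ≤ √((2σ²/n)·I(W;Z^n)), where I(W;Z^n) = E_{P_{WZ^n}}[ı(W,Z^n)] is the mutual information. -/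
/-!
Integrating `x + 1 ≤ exp x` turns the exponential-moment inequality into
`λ E[gen] - λ²σ²/(2n) - I(W;Z^n) ≤ 0` for every `λ`. A quadratic in `λ` that stays nonpositive
has nonpositive discriminant, which is the claimed bound `E[gen]² ≤ (2σ²/n) I(W;Z^n)`.
-/

open MeasureTheory Real

theorem integral_nonpos_of_lintegral_exp_le_one {Ω : Type*} [MeasurableSpace Ω] {μ : Measure Ω}
    [IsProbabilityMeasure μ] {X : Ω → ℝ} (hX : Integrable X μ)
    (hexp : ∫⁻ ω, ENNReal.ofReal (exp (X ω)) ∂μ ≤ 1) :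
    ∫ ω, X ω ∂μ ≤ 0 := by
  have hexp_meas : AEStronglyMeasurable (fun ω => exp (X ω)) μ :=
    continuous_exp.comp_aestronglyMeasurable hX.aestronglyMeasurable
  have hexp_int : Integrable (fun ω => exp (X ω)) μ := by
    refine ⟨hexp_meas, ?_⟩
    rw [hasFiniteIntegral_iff_ofReal (.of_forall fun ω => (exp_pos _).le)]
    exact hexp.trans_lt ENNReal.one_lt_top
  have hexp_le : ∫ ω, exp (X ω) ∂μ ≤ 1 := by
    rw [integral_eq_lintegral_of_nonneg_ae (.of_forall fun ω => (exp_pos _).le) hexp_meas]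
    exact ENNReal.toReal_le_of_le_ofReal zero_le_one (by simpa using hexp)
  have hlin : ∫ ω, (X ω + 1) ∂μ ≤ ∫ ω, exp (X ω) ∂μ :=
    integral_mono (hX.add (integrable_const _)) hexp_int fun ω => add_one_le_exp _
  rw [integral_add hX (integrable_const _), integral_const, probReal_univ, one_smul] at hlin
  linarith

theorem sq_le_of_forall_mul_sub_mul_sq_le {a b c : ℝ} (h : ∀ x : ℝ, x * a - c * x ^ 2 ≤ b) :
    a ^ 2 ≤ 4 * c * b := by
  have hdisc := discrim_le_zero (a := c) (b := -a) (c := b) fun x => by nlinarith [h x]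
  rw [discrim] at hdisc
  linarith

theorem average_generalization_bound_general {𝒲 𝒵 : Type*} [MeasurableSpace 𝒲] [MeasurableSpace 𝒵]
    (μ : Measure (𝒲 × 𝒵)) [IsProbabilityMeasure μ] (σ : ℝ) (n : ℕ)
    (gen : 𝒲 × 𝒵 → ℝ) (hgenint : Integrable gen μ)
    (i : 𝒲 × 𝒵 → ℝ)
    (hiint : Integrable i μ)
    (hexp : ∀ l : ℝ,
      ∫⁻ p, ENNReal.ofReal (Real.exp (l * gen p - l ^ 2 * σ ^ 2 / (2 * n) - i p)) ∂μ ≤ 1) :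
    |∫ p, gen p ∂μ| ≤ Real.sqrt ((2 * σ ^ 2 / n) * ∫ p, i p ∂μ) := by
  have hquadratic : ∀ l : ℝ,
      l * ∫ p, gen p ∂μ - σ ^ 2 / (2 * n) * l ^ 2 ≤ ∫ p, i p ∂μ := fun l => by
    have hshift : Integrable (fun p => l * gen p - l ^ 2 * σ ^ 2 / (2 * n)) μ :=
      (hgenint.const_mul l).sub (integrable_const _)
    have hmoment := integral_nonpos_of_lintegral_exp_le_one
      (X := fun p => l * gen p - l ^ 2 * σ ^ 2 / (2 * n) - i p) (hshift.sub hiint) (hexp l)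
    rw [integral_sub hshift hiint, integral_sub (hgenint.const_mul l) (integrable_const _),
      integral_const_mul, integral_const, probReal_univ, one_smul] at hmoment
    linarith [show l ^ 2 * σ ^ 2 / (2 * n) = σ ^ 2 / (2 * n) * l ^ 2 by ring]
  refine abs_le_sqrt ((sq_le_of_forall_mul_sub_mul_sq_le hquadratic).trans_eq ?_)
  ring

/-- Corollary 1: under the main exponential-moment inequality, the average generalization
error satisfies `|E[gen(W,Z^n)]| ≤ √((2σ²/n) I(W;Z^n))`, with `I(W;Z^n) = E[ı(W,Z^n)]`. -/
theorem average_generalization_bound {𝒲 𝒵 : Type*} [MeasurableSpace 𝒲] [MeasurableSpace 𝒵]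
    (μ : Measure (𝒲 × 𝒵)) [IsProbabilityMeasure μ] (σ : ℝ) (hσ : 0 < σ) (n : ℕ) (hn : 0 < n)
    (μW : Measure 𝒲) (μZ : Measure 𝒵) (hμW : μW = μ.map Prod.fst) (hμZ : μZ = μ.map Prod.snd)
    (hac : μ ≪ μW.prod μZ)
    (gen : 𝒲 × 𝒵 → ℝ) (hgen : Measurable gen) (hgenint : Integrable gen μ)
    (i : 𝒲 × 𝒵 → ℝ) (hi : i = fun p => Real.log ((μ.rnDeriv (μW.prod μZ) p).toReal))
    (hiint : Integrable i μ)
    (hexp : ∀ l : ℝ,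
      ∫⁻ p, ENNReal.ofReal (Real.exp (l * gen p - l ^ 2 * σ ^ 2 / (2 * n) - i p)) ∂μ ≤ 1) :
    |∫ p, gen p ∂μ| ≤ Real.sqrt ((2 * σ ^ 2 / n) * ∫ p, i p ∂μ) :=
  average_generalization_bound_general μ σ n gen hgenint i hiint hexp
end

section
/- Suppose that for every w, P_{Z^n}[|gen(w,Z^n)| > ε] ≤ 2·exp(−nε²/(2σ²)), and that P_{WZ^n} ≪ P_W × P_{Z^n} with information density ı. Then for every γ ∈ ℝ and ε > 0: P_{WZ^n}[|gen(W,Z^n)| > ε] ≤ P_{WZ^n}[ı(W,Z^n) ≥ γ] + 2·exp(γ − nε²/(2σ²)). Consequently, for δ ∈ (0,1) and any γ with P_{WZ^n}[ı(W,Z^n) ≥ γ] < δ, with probability at least 1−δ under P_{WZ^n}: |gen(W,Z^n)| ≤ √((2σ²/n)(γ + log(2/(δ − P_{WZ^n}[ı(W,Z^n) ≥ γ])))). -/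
open MeasureTheory Real

/-!
On the event `{ı < γ}` the density of `P_{WZ^n}` with respect to `P_W × P_{Z^n}` is at
most `exp γ`, so changing measure costs a factor `exp γ` there, while the complementary
event `{ı ≥ γ}` is paid for directly. Under the product measure `W` and `Z^n` are
independent, so the pointwise tail bound integrates over `w` to the same tail bound.
Choosing `ε` so that `2 exp(γ - nε²/(2σ²)) = δ - P[ı ≥ γ]` gives the high-probability
form; this `ε` is positive because the change-of-measure bound on the whole space forces
`1 ≤ P[ı ≥ γ] + exp γ`.
-/

namespace Real

lemma add_log_two_div_pos {γ x : ℝ} (hx : 0 < x) (hxγ : x < 2 * exp γ) :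
    0 < γ + log (2 / x) := by
  have : log (x / 2) < γ := (log_lt_iff_lt_exp (by positivity)).2 (by linarith)
  rw [← inv_div, log_inv]
  linarith

lemma two_mul_exp_sub_sq_sqrt {σ n γ x : ℝ} (hσ : 0 < σ) (hn : 0 < n) (hx : 0 < x)
    (hpos : 0 < γ + log (2 / x)) :
    2 * exp (γ - n * sqrt (2 * σ ^ 2 / n * (γ + log (2 / x))) ^ 2 / (2 * σ ^ 2)) = x := by
  have hexponent : n * sqrt (2 * σ ^ 2 / n * (γ + log (2 / x))) ^ 2 / (2 * σ ^ 2)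
      = γ + log (2 / x) := by
    rw [sq_sqrt (by positivity)]
    field_simp
  rw [hexponent, sub_add_cancel_left, ← log_inv, inv_div, exp_log (by positivity)]
  ring

end Real

namespace MeasureTheory

section ChangeOfMeasure

variable {α : Type*} [MeasurableSpace α] {μ ν : Measure α}
  [SigmaFinite μ] [μ.HaveLebesgueDecomposition ν] [SFinite ν]

lemma measure_inter_llr_lt_le (hac : μ ≪ ν) (S : Set α) (γ : ℝ) :
    μ (S ∩ {x | llr μ ν x < γ}) ≤ ENNReal.ofReal (exp γ) * ν S := by
  have hdensity : ∀ᵐ x ∂ν, x ∈ S ∩ {x | llr μ ν x < γ} →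
      μ.rnDeriv ν x ≤ ENNReal.ofReal (exp γ) := by
    filter_upwards [μ.rnDeriv_lt_top ν] with x hfin hx
    exact (ENNReal.le_ofReal_iff_toReal_le hfin.ne (exp_pos γ).le).2
      (lt_exp_of_log_lt hx.2).le
  calc μ (S ∩ {x | llr μ ν x < γ})
      = ∫⁻ x in S ∩ {x | llr μ ν x < γ}, μ.rnDeriv ν x ∂ν :=
        (Measure.setLIntegral_rnDeriv hac _).symm
    _ ≤ ∫⁻ _ in S ∩ {x | llr μ ν x < γ}, ENNReal.ofReal (exp γ) ∂ν :=
        setLIntegral_mono_ae aemeasurable_const hdensity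
    _ ≤ ENNReal.ofReal (exp γ) * ν S := by
        rw [setLIntegral_const]
        gcongr
        exact Set.inter_subset_left

lemma measure_le_measure_le_llr_add (hac : μ ≪ ν) (γ : ℝ) (A : Set α) :
    μ A ≤ μ {x | γ ≤ llr μ ν x} + ENNReal.ofReal (exp γ) * ν A := by
  have hcover : A ⊆ {x | γ ≤ llr μ ν x} ∪ (A ∩ {x | llr μ ν x < γ}) := fun x hx =>
    (le_or_gt γ (llr μ ν x)).imp id fun h => ⟨hx, h⟩
  calc μ A ≤ μ {x | γ ≤ llr μ ν x} + μ (A ∩ {x | llr μ ν x < γ}) :=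
        (measure_mono hcover).trans (measure_union_le _ _)
    _ ≤ _ := by gcongr; exact measure_inter_llr_lt_le hac A γ

lemma measure_lt_abs_le_measure_le_llr_add (hac : μ ≪ ν) {g : α → ℝ} {σ n : ℝ}
    (htail : ∀ ε : ℝ, 0 < ε →
      ν {x | ε < |g x|} ≤ ENNReal.ofReal (2 * exp (-n * ε ^ 2 / (2 * σ ^ 2))))
    (γ ε : ℝ) (hε : 0 < ε) :
    μ {x | ε < |g x|} ≤ μ {x | γ ≤ llr μ ν x}
      + ENNReal.ofReal (2 * exp (γ - n * ε ^ 2 / (2 * σ ^ 2))) := by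
  refine (measure_le_measure_le_llr_add hac γ _).trans (add_le_add_right ?_ _)
  calc ENNReal.ofReal (exp γ) * ν {x | ε < |g x|}
      ≤ ENNReal.ofReal (exp γ) * ENNReal.ofReal (2 * exp (-n * ε ^ 2 / (2 * σ ^ 2))) := by
        gcongr; exact htail ε hε
    _ = ENNReal.ofReal (2 * exp (γ - n * ε ^ 2 / (2 * σ ^ 2))) := by
        rw [← ENNReal.ofReal_mul (exp_pos γ).le, sub_eq_add_neg, exp_add, neg_mul, neg_div]
        congr 1
        ring

end ChangeOfMeasure

lemma Measure.prod_apply_le_of_forall_slice_le {β γ : Type*} [MeasurableSpace β]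
    [MeasurableSpace γ] {μ : Measure β} {ν : Measure γ} [IsProbabilityMeasure μ] [SFinite ν]
    {A : Set (β × γ)} (hA : MeasurableSet A) {c : ENNReal}
    (hslice : ∀ b, ν (Prod.mk b ⁻¹' A) ≤ c) :
    μ.prod ν A ≤ c := by
  rw [Measure.prod_apply hA]
  exact (lintegral_mono hslice).trans (by simp)

lemma ofReal_one_sub_le_measure_abs_le_sqrt {α : Type*} [MeasurableSpace α]
    {μ : Measure α} [IsProbabilityMeasure μ] {g : α → ℝ} (hg : Measurable g) {σ n γ δ : ℝ}
    (hσ : 0 < σ) (hn : 0 < n) {B : Set α} (hδ : δ < 1) (hBδ : (μ B).toReal < δ)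
    (hcover : 1 ≤ μ B + ENNReal.ofReal (exp γ))
    (htail : ∀ ε : ℝ, 0 < ε →
      μ {x | ε < |g x|} ≤ μ B + ENNReal.ofReal (2 * exp (γ - n * ε ^ 2 / (2 * σ ^ 2)))) :
    ENNReal.ofReal (1 - δ) ≤
      μ {x | |g x| ≤ sqrt (2 * σ ^ 2 / n * (γ + log (2 / (δ - (μ B).toReal))))} := by
  set a := (μ B).toReal
  set ε := sqrt (2 * σ ^ 2 / n * (γ + log (2 / (δ - a))))
  have hμB : μ B = ENNReal.ofReal a := (ENNReal.ofReal_toReal (measure_ne_top μ B)).symm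
  have hgap : 0 < δ - a := sub_pos.2 hBδ
  have hγ : δ - a < 2 * exp γ := by
    rw [hμB, ← ENNReal.ofReal_add ENNReal.toReal_nonneg (exp_pos γ).le,
      ENNReal.one_le_ofReal] at hcover
    linarith [exp_pos γ]
  have hpos := add_log_two_div_pos hgap hγ
  have hsmall : μ {x | ε < |g x|} ≤ ENNReal.ofReal δ := by
    have := htail ε (sqrt_pos.2 (by positivity))
    rwa [two_mul_exp_sub_sq_sqrt hσ hn hgap hpos, hμB,
      ← ENNReal.ofReal_add ENNReal.toReal_nonneg hgap.le, add_sub_cancel] at this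
  have hcompl : {x | |g x| ≤ ε} = {x | ε < |g x|}ᶜ := by
    simp only [Set.compl_ofPred, not_lt]
  rw [hcompl, prob_compl_eq_one_sub (measurableSet_lt measurable_const hg.abs),
    ENNReal.ofReal_sub _ (ENNReal.toReal_nonneg.trans hBδ.le), ENNReal.ofReal_one]
  exact tsub_le_tsub_left hsmall 1

end MeasureTheory

/-- Theorem 2 (strong-converse-based single-draw bound): if for every `w`,
`P_{Z^n}[|gen(w,Z^n)| > ε] ≤ 2 exp(-nε²/(2σ²))` and `P_{WZ^n} ≪ P_W × P_{Z^n}` with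
information density `ı`, then for every `γ` and `ε > 0`,
`P_{WZ^n}[|gen| > ε] ≤ P_{WZ^n}[ı ≥ γ] + 2 exp(γ - nε²/(2σ²))`; consequently, for
`δ ∈ (0,1)` and any `γ` with `P_{WZ^n}[ı ≥ γ] < δ`, with probability at least `1 - δ`,
`|gen(W,Z^n)| ≤ √((2σ²/n)(γ + log(2/(δ - P_{WZ^n}[ı ≥ γ]))))`. -/
theorem strong_converse_generalization_bound {𝒲 𝒵 : Type*} [MeasurableSpace 𝒲]
    [MeasurableSpace 𝒵] (μ : Measure (𝒲 × 𝒵)) [IsProbabilityMeasure μ]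
    (σ : ℝ) (hσ : 0 < σ) (n : ℕ) (hn : 1 ≤ n)
    (μW : Measure 𝒲) (μZ : Measure 𝒵) (hμW : μW = μ.map Prod.fst) (hμZ : μZ = μ.map Prod.snd)
    (hac : μ ≪ μW.prod μZ)
    (gen : 𝒲 × 𝒵 → ℝ) (hgen : Measurable gen)
    (i : 𝒲 × 𝒵 → ℝ) (hi : i = fun p => Real.log ((μ.rnDeriv (μW.prod μZ) p).toReal))
    (htail : ∀ w : 𝒲, ∀ ε : ℝ, 0 < ε →
      μZ {z | ε < |gen (w, z)|} ≤ ENNReal.ofReal (2 * Real.exp (-n * ε ^ 2 / (2 * σ ^ 2)))) :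
    (∀ γ ε : ℝ, 0 < ε →
      μ {p | ε < |gen p|} ≤ μ {p | γ ≤ i p}
        + ENNReal.ofReal (2 * Real.exp (γ - n * ε ^ 2 / (2 * σ ^ 2))))
    ∧ (∀ δ γ : ℝ, δ ∈ Set.Ioo (0 : ℝ) 1 → (μ {p | γ ≤ i p}).toReal < δ →
        ENNReal.ofReal (1 - δ) ≤
          μ {p | |gen p| ≤ Real.sqrt ((2 * σ ^ 2 / n)
            * (γ + Real.log (2 / (δ - (μ {p' | γ ≤ i p'}).toReal))))}) := by
  have : IsProbabilityMeasure μW :=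
    hμW ▸ Measure.isProbabilityMeasure_map measurable_fst.aemeasurable
  have : IsProbabilityMeasure μZ :=
    hμZ ▸ Measure.isProbabilityMeasure_map measurable_snd.aemeasurable
  obtain rfl : i = llr μ (μW.prod μZ) := hi
  have hprod_tail : ∀ ε : ℝ, 0 < ε → μW.prod μZ {p | ε < |gen p|}
      ≤ ENNReal.ofReal (2 * exp (-n * ε ^ 2 / (2 * σ ^ 2))) := fun ε hε =>
    Measure.prod_apply_le_of_forall_slice_le (measurableSet_lt measurable_const hgen.abs)
      fun w => htail w ε hε
  have hdeviation := measure_lt_abs_le_measure_le_llr_add hac hprod_tail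
  refine ⟨hdeviation, fun δ γ hδ hγδ => ?_⟩
  have hcover : 1 ≤ μ {p | γ ≤ llr μ (μW.prod μZ) p} + ENNReal.ofReal (exp γ) := by
    simpa using measure_le_measure_le_llr_add hac γ Set.univ
  exact ofReal_one_sub_le_measure_abs_le_sqrt hgen hσ (by exact_mod_cast hn) hδ.2 hγδ hcover
    (hdeviation γ)
end
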